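/- Let σ > 0 and let h_σ(x) := (2πσ²)^{−1/2}·exp(−x²/(2σ²)) be the Gaussian kernel. Then ∫_0^1 h_σ''(x − 1/2)² / h_σ(x − 1/2) dx = 2·erf(1/(2√2·σ))/σ⁴ − e^{−1/(8σ²)}·(4σ² + 1)/(4√(2π)·σ⁷), where erf(x) := (2/√π)·∫_0^x e^{−t²} dt. Moreover, as σ → 0, ∫_0^1 h_σ''(x − 1/2)²/h_σ(x − 1/2) dx = 2σ^{−4} + o(σ^{−4}), i.e. σ⁴·∫_0^1 h_σ''(x − 1/2)²/h_σ(x − 1/2) dx → 2. -/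

import Mathlib

open MeasureTheory Filter Real

noncomputable def gaussKernel (σ : ℝ) : ℝ → ℝ := fun x =>
  (1 / Real.sqrt (2 * π * σ ^ 2)) * Real.exp (-(x ^ 2) / (2 * σ ^ 2))

noncomputable def erf (x : ℝ) : ℝ :=
  (2 / Real.sqrt π) * ∫ t in (0 : ℝ)..x, Real.exp (-(t ^ 2))

lemma gauss_pos {σ : ℝ} (hσ : 0 < σ) (x : ℝ) : 0 < gaussKernel σ x := by
  unfold gaussKernel
  positivity

lemma gauss_cont (σ : ℝ) : Continuous (gaussKernel σ) := by
  unfold gaussKernel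
  continuity

lemma hasDerivAt_gauss {σ : ℝ} (hσ : 0 < σ) (x : ℝ) :
    HasDerivAt (gaussKernel σ) (gaussKernel σ x * (-x / σ ^ 2)) x := by
  have h1 : HasDerivAt (fun x : ℝ => -(x ^ 2) / (2 * σ ^ 2)) (-x / σ ^ 2) x := by
    have := ((hasDerivAt_pow 2 x).neg).div_const (2 * σ ^ 2)
    convert this using 1
    · rfl
    · rfl
    · rfl
    field_simp
    ring
  have := (h1.exp).const_mul (1 / Real.sqrt (2 * π * σ ^ 2))
  convert this using 1
  · rfl
  · rfl
  · rfl
  unfold gaussKernel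
  ring

lemma deriv_gauss {σ : ℝ} (hσ : 0 < σ) :
    deriv (gaussKernel σ) = fun x => gaussKernel σ x * (-x / σ ^ 2) :=
  funext fun x => (hasDerivAt_gauss hσ x).deriv

lemma deriv2_gauss {σ : ℝ} (hσ : 0 < σ) (x : ℝ) :
    deriv (deriv (gaussKernel σ)) x = gaussKernel σ x * (x ^ 2 / σ ^ 4 - 1 / σ ^ 2) := by
  rw [deriv_gauss hσ]
  have h2 : HasDerivAt (fun x : ℝ => -x / σ ^ 2) (-1 / σ ^ 2) x := by
    have := (hasDerivAt_id x).neg.div_const (σ ^ 2)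
    convert this using 1
    · rfl
    · rfl
    · rfl
  have := (hasDerivAt_gauss hσ x).mul h2
  rw [show (fun x => gaussKernel σ x * (-x / σ ^ 2)) = (gaussKernel σ * fun x => -x / σ ^ 2) from rfl, this.deriv]
  have hσ2 : σ ≠ 0 := hσ.ne'
  field_simp
  ring

lemma hasDerivAt_erf (x : ℝ) :
    HasDerivAt erf ((2 / Real.sqrt π) * Real.exp (-(x ^ 2))) x := by
  have hc : Continuous fun t : ℝ => Real.exp (-(t ^ 2)) := by continuity
  have h : HasDerivAt (fun y => ∫ t in (0 : ℝ)..y, Real.exp (-(t ^ 2)))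
      (Real.exp (-(x ^ 2))) x :=
    intervalIntegral.integral_hasDerivAt_right (hc.intervalIntegrable 0 x)
      hc.aestronglyMeasurable.stronglyMeasurableAtFilter hc.continuousAt
  exact h.const_mul _

lemma erf_neg (x : ℝ) : erf (-x) = - erf x := by
  unfold erf
  have h := intervalIntegral.integral_comp_neg (a := x) (b := (0:ℝ))
      (fun t => Real.exp (-(t ^ 2)))
  simp only [neg_zero, neg_neg, neg_sq] at h
  rw [← h, intervalIntegral.integral_symm]
  ring

lemma tendsto_erf : Tendsto erf atTop (nhds 1) := by
  have hint : IntegrableOn (fun t : ℝ => Real.exp (-(t ^ 2))) (Set.Ioi 0) := by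
    have := (integrable_exp_neg_mul_sq (b := 1) one_pos).integrableOn (s := Set.Ioi 0)
    simpa using this
  have h1 : Tendsto (fun y : ℝ => ∫ t in (0 : ℝ)..y, Real.exp (-(t ^ 2))) atTop
      (nhds (∫ t in Set.Ioi (0:ℝ), Real.exp (-(t ^ 2)))) :=
    intervalIntegral_tendsto_integral_Ioi 0 hint tendsto_id
  have h2 : (∫ t in Set.Ioi (0:ℝ), Real.exp (-(t ^ 2))) = Real.sqrt π / 2 := by
    have := integral_gaussian_Ioi 1
    simpa using this
  rw [h2] at h1
  have := h1.const_mul (2 / Real.sqrt π)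
  have hπ : Real.sqrt π ≠ 0 := by positivity
  have : (2 / Real.sqrt π) * (Real.sqrt π / 2) = 1 := by field_simp
  unfold erf
  simpa [erf, this] using h1.const_mul (2 / Real.sqrt π)

noncomputable def F (σ : ℝ) (x : ℝ) : ℝ :=
  (1 / Real.sqrt (2 * π * σ ^ 2)) / σ ^ 8 *
      (Real.exp (-((x - 1/2) ^ 2) / (2 * σ ^ 2)) *
        (-σ ^ 2 * (x - 1/2) ^ 3 - σ ^ 4 * (x - 1/2)))
    + erf ((x - 1/2) / (Real.sqrt 2 * σ)) / σ ^ 4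

lemma sqrt2pi_sigma {σ : ℝ} (hσ : 0 < σ) :
    Real.sqrt (2 * π * σ ^ 2) = Real.sqrt 2 * Real.sqrt π * σ := by
  rw [Real.sqrt_mul (by positivity), Real.sqrt_mul (by norm_num), Real.sqrt_sq hσ.le]

lemma hasDerivAt_F {σ : ℝ} (hσ : 0 < σ) (x : ℝ) :
    HasDerivAt (F σ)
      (gaussKernel σ (x - 1/2) * ((x - 1/2) ^ 2 / σ ^ 4 - 1 / σ ^ 2) ^ 2) x := by
  set u := x - 1/2 with hu_def
  have hu : HasDerivAt (fun x : ℝ => x - 1/2) 1 x := (hasDerivAt_id x).sub_const _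
  have hin : HasDerivAt (fun x : ℝ => -((x - 1/2) ^ 2) / (2 * σ ^ 2))
      (-u / σ ^ 2) x := by
    have := ((hu.pow 2).neg).div_const (2 * σ ^ 2)
    convert this using 1
    · rfl
    · rfl
    · rfl
    field_simp
    ring
  have hexp : HasDerivAt (fun x : ℝ => Real.exp (-((x - 1/2) ^ 2) / (2 * σ ^ 2)))
      (Real.exp (-(u ^ 2) / (2 * σ ^ 2)) * (-u / σ ^ 2)) x := hin.exp
  have hpoly : HasDerivAt (fun x : ℝ => -σ ^ 2 * (x - 1/2) ^ 3 - σ ^ 4 * (x - 1/2))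
      (-σ ^ 2 * (3 * u ^ 2) - σ ^ 4) x := by
    have h3 := (hu.pow 3).const_mul (-σ ^ 2)
    have h1 := hu.const_mul (σ ^ 4)
    have := h3.sub h1
    convert this using 1
    · rfl
    · rfl
    · rfl
    ring
  have hprod := ((hexp.mul hpoly).const_mul ((1 / Real.sqrt (2 * π * σ ^ 2)) / σ ^ 8))
  have herfin : HasDerivAt (fun x : ℝ => (x - 1/2) / (Real.sqrt 2 * σ))
      (1 / (Real.sqrt 2 * σ)) x := by
    have := hu.div_const (Real.sqrt 2 * σ)
    simpa using this
  have herf : HasDerivAt (fun x : ℝ => erf ((x - 1/2) / (Real.sqrt 2 * σ)) / σ ^ 4)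
      ((2 / Real.sqrt π) * Real.exp (-((u / (Real.sqrt 2 * σ)) ^ 2)) *
        (1 / (Real.sqrt 2 * σ)) / σ ^ 4) x := by
    exact ((hasDerivAt_erf (u / (Real.sqrt 2 * σ))).comp x herfin).div_const _
  have hF := hprod.add herf
  convert hF using 1
  · rfl
  · rfl
  · rfl
  have hargs : ((u / (Real.sqrt 2 * σ)) ^ 2) = u ^ 2 / (2 * σ ^ 2) := by
    rw [div_pow, mul_pow, Real.sq_sqrt (by norm_num : (2:ℝ) ≥ 0)]
  rw [hargs]
  unfold gaussKernel
  rw [sqrt2pi_sigma hσ]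
  have hs2 : Real.sqrt 2 ≠ 0 := by positivity
  have hsp : Real.sqrt π ≠ 0 := by positivity
  have hσ' : σ ≠ 0 := hσ.ne'
  rw [neg_div]
  field_simp
  ring

lemma part1 {σ : ℝ} (hσ : 0 < σ) :
    (∫ x in (0 : ℝ)..1,
        (deriv (deriv (gaussKernel σ)) (x - 1 / 2)) ^ 2 / gaussKernel σ (x - 1 / 2)) =
      2 * erf (1 / (2 * Real.sqrt 2 * σ)) / σ ^ 4
        - Real.exp (-1 / (8 * σ ^ 2)) * (4 * σ ^ 2 + 1)
            / (4 * Real.sqrt (2 * π) * σ ^ 7) := by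
  have hσ' : σ ≠ 0 := hσ.ne'
  have hcongr : (fun x : ℝ => (deriv (deriv (gaussKernel σ)) (x - 1 / 2)) ^ 2
      / gaussKernel σ (x - 1 / 2)) =
      fun x => gaussKernel σ (x - 1/2) * ((x - 1/2) ^ 2 / σ ^ 4 - 1 / σ ^ 2) ^ 2 := by
    funext x
    rw [deriv2_gauss hσ, div_eq_iff (gauss_pos hσ _).ne']
    ring
  rw [show (∫ x in (0 : ℝ)..1,
        (deriv (deriv (gaussKernel σ)) (x - 1 / 2)) ^ 2 / gaussKernel σ (x - 1 / 2)) =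
      ∫ x in (0 : ℝ)..1,
        gaussKernel σ (x - 1/2) * ((x - 1/2) ^ 2 / σ ^ 4 - 1 / σ ^ 2) ^ 2 by
    rw [intervalIntegral.integral_congr]
    intro x _
    exact congrFun hcongr x]
  have hcont : Continuous fun x : ℝ =>
      gaussKernel σ (x - 1/2) * ((x - 1/2) ^ 2 / σ ^ 4 - 1 / σ ^ 2) ^ 2 := by
    have := gauss_cont σ
    continuity
  rw [intervalIntegral.integral_eq_sub_of_hasDerivAt
    (fun x _ => hasDerivAt_F hσ x) (hcont.intervalIntegrable 0 1)]
  unfold F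
  have e1 : (1:ℝ) - 1/2 = 1/2 := by norm_num
  have e0 : (0:ℝ) - 1/2 = -(1/2) := by norm_num
  rw [e1, e0]
  simp only [neg_sq]
  have harg : -((1/2 : ℝ)^2) / (2 * σ ^ 2) = -1 / (8 * σ ^ 2) := by
    rw [div_eq_div_iff (by positivity) (by positivity)]; ring
  have herfarg : (1/2 : ℝ) / (Real.sqrt 2 * σ) = 1 / (2 * Real.sqrt 2 * σ) := by
    rw [div_eq_div_iff (by positivity) (by positivity)]; ring
  have herfneg : erf (-(1/2 : ℝ) / (Real.sqrt 2 * σ)) = - erf (1 / (2 * Real.sqrt 2 * σ)) := by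
    rw [show (-(1/2 : ℝ) / (Real.sqrt 2 * σ)) = -((1/2 : ℝ) / (Real.sqrt 2 * σ)) by ring,
      erf_neg, herfarg]
  rw [sqrt2pi_sigma hσ, Real.sqrt_mul (by norm_num : (0:ℝ) ≤ 2) π]
  have hs2 : Real.sqrt 2 ≠ 0 := by positivity
  have hsp : Real.sqrt π ≠ 0 := by positivity
  rw [harg, herfarg, herfneg]
  field_simp
  ring

lemma tendsto_inv_arg : Tendsto (fun σ : ℝ => 1 / (2 * Real.sqrt 2 * σ))
    (nhdsWithin 0 (Set.Ioi 0)) atTop := by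
  have h : Tendsto (fun σ : ℝ => 2 * Real.sqrt 2 * σ) (nhdsWithin 0 (Set.Ioi 0))
      (nhdsWithin 0 (Set.Ioi 0)) := by
    rw [tendsto_nhdsWithin_iff]
    constructor
    · have : Tendsto (fun σ : ℝ => 2 * Real.sqrt 2 * σ) (nhds 0) (nhds 0) := by
        have hc : Continuous fun σ : ℝ => 2 * Real.sqrt 2 * σ := by continuity
        simpa using hc.tendsto 0
      exact this.mono_left nhdsWithin_le_nhds
    · filter_upwards [self_mem_nhdsWithin] with σ hσ
      have hσ' : (0:ℝ) < σ := hσ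
      have : (0:ℝ) < Real.sqrt 2 := by positivity
      exact Set.mem_Ioi.mpr (by positivity)
  refine h.inv_tendsto_nhdsGT_zero.congr fun σ => ?_
  simp [one_div]

lemma tendsto_cube_exp : Tendsto (fun t : ℝ => t ^ 3 * Real.exp (-(t ^ 2 / 8)))
    atTop (nhds 0) := by
  apply squeeze_zero' (t₀ := atTop)
  · filter_upwards [eventually_ge_atTop (0:ℝ)] with t ht
    positivity
  · filter_upwards [eventually_ge_atTop (8:ℝ)] with t ht
    have h1 : t ≤ t ^ 2 / 8 := by nlinarith
    have := Real.exp_le_exp.mpr (neg_le_neg h1)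
    calc t ^ 3 * Real.exp (-(t ^ 2 / 8)) ≤ t ^ 3 * Real.exp (-t) := by
          apply mul_le_mul_of_nonneg_left this (by positivity)
      _ = t ^ 3 * Real.exp (-t) := rfl
  · exact tendsto_pow_mul_exp_neg_atTop_nhds_zero 3

lemma tendsto_term2 : Tendsto (fun σ : ℝ =>
    Real.exp (-1 / (8 * σ ^ 2)) * (4 * σ ^ 2 + 1) / (4 * Real.sqrt (2 * π) * σ ^ 3))
    (nhdsWithin 0 (Set.Ioi 0)) (nhds 0) := by
  have hinv : Tendsto (fun σ : ℝ => σ⁻¹) (nhdsWithin 0 (Set.Ioi 0)) atTop :=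
    tendsto_inv_nhdsGT_zero
  have h1 : Tendsto (fun σ : ℝ => (σ⁻¹) ^ 3 * Real.exp (-((σ⁻¹) ^ 2 / 8)))
      (nhdsWithin 0 (Set.Ioi 0)) (nhds 0) := tendsto_cube_exp.comp hinv
  have h2 : Tendsto (fun σ : ℝ => (4 * σ ^ 2 + 1) / (4 * Real.sqrt (2 * π)))
      (nhdsWithin 0 (Set.Ioi 0)) (nhds ((4 * 0 ^ 2 + 1) / (4 * Real.sqrt (2 * π)))) := by
    apply Tendsto.mono_left _ nhdsWithin_le_nhds
    apply Continuous.tendsto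
    continuity
  have h := h1.mul h2
  rw [zero_mul] at h
  apply h.congr'
  filter_upwards [self_mem_nhdsWithin] with σ hσ
  have hσ0 : σ ≠ 0 := (Set.mem_Ioi.mp hσ).ne'
  have hsp : Real.sqrt (2 * π) ≠ 0 := by positivity
  have harg : -((σ⁻¹) ^ 2 / 8) = -1 / (8 * σ ^ 2) := by
    field_simp
  rw [harg]
  field_simp

lemma tendsto_rhs : Tendsto (fun σ : ℝ =>
    2 * erf (1 / (2 * Real.sqrt 2 * σ))
      - Real.exp (-1 / (8 * σ ^ 2)) * (4 * σ ^ 2 + 1) / (4 * Real.sqrt (2 * π) * σ ^ 3))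
    (nhdsWithin 0 (Set.Ioi 0)) (nhds 2) := by
  have h1 : Tendsto (fun σ : ℝ => 2 * erf (1 / (2 * Real.sqrt 2 * σ)))
      (nhdsWithin 0 (Set.Ioi 0)) (nhds (2 * 1)) :=
    (tendsto_erf.comp tendsto_inv_arg).const_mul 2
  have := h1.sub tendsto_term2
  simpa using this


theorem stmt16 :
    (∀ σ : ℝ, 0 < σ →
      (∫ x in (0 : ℝ)..1,
          (deriv (deriv (gaussKernel σ)) (x - 1 / 2)) ^ 2 / gaussKernel σ (x - 1 / 2)) =
        2 * erf (1 / (2 * Real.sqrt 2 * σ)) / σ ^ 4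
          - Real.exp (-1 / (8 * σ ^ 2)) * (4 * σ ^ 2 + 1)
              / (4 * Real.sqrt (2 * π) * σ ^ 7)) ∧
    Tendsto (fun σ : ℝ =>
        σ ^ 4 * ∫ x in (0 : ℝ)..1,
          (deriv (deriv (gaussKernel σ)) (x - 1 / 2)) ^ 2 / gaussKernel σ (x - 1 / 2))
      (nhdsWithin 0 (Set.Ioi 0)) (nhds 2) := by
  constructor
  · exact fun σ hσ => part1 hσ
  · apply tendsto_rhs.congr'
    filter_upwards [self_mem_nhdsWithin] with σ hσ
    have hσ' : (0:ℝ) < σ := hσ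
    rw [part1 hσ']
    have hσ0 : σ ≠ 0 := hσ'.ne'
    have hsp : Real.sqrt (2 * π) ≠ 0 := by positivity
    field_simp
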